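/- Let f : ℝ → ℝ be continuous and let u be a solution of the radial equation on an interval [R₁, R₂] with 0 < R₁, such that u'(R₁) = 0 and u(t)·u'(t) ≤ 0 for all t ∈ [R₁, R₂]. Then for every r ∈ [R₁, R₂], m·r^N·I(r) − m·R₁^N·F(u(R₁)) ≥ ∫_{R₁}^{r} t^(N−1)·Q(u(t)) dt. -/

import Mathlib

open Set Filter MeasureTheory

noncomputable def phim (m x : ℝ) : ℝ := |x| ^ (m - 2) * x

noncomputable def Fint (f : ℝ → ℝ) (s : ℝ) : ℝ := ∫ t in (0:ℝ)..s, f t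

noncomputable def Qfun (N m : ℝ) (f : ℝ → ℝ) (s : ℝ) : ℝ :=
  m * N * Fint f s - (N - m) * s * f s

/-- `u` (with derivative function `u'`) is a solution of the radial quasilinear
equation on the set `J`. -/
def IsSolutionOn (N m : ℝ) (f : ℝ → ℝ) (J : Set ℝ) (u u' : ℝ → ℝ) : Prop :=
  (∀ r ∈ J, HasDerivWithinAt u (u' r) J r) ∧ ContinuousOn u' J ∧
    ∃ w' : ℝ → ℝ,
      (∀ r ∈ J ∩ Set.Ioi (0:ℝ),
        HasDerivWithinAt (fun t => phim m (u' t)) (w' r) (J ∩ Set.Ioi (0:ℝ)) r) ∧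
      ContinuousOn w' (J ∩ Set.Ioi (0:ℝ)) ∧
      ∀ r ∈ J ∩ Set.Ioi (0:ℝ), w' r + ((N - 1) / r) * phim m (u' r) + f (u r) = 0

def IsIVPSolutionOn (N m : ℝ) (f : ℝ → ℝ) (α : ℝ) (J : Set ℝ) (u u' : ℝ → ℝ) : Prop :=
  IsSolutionOn N m f J u u' ∧ u 0 = α ∧ u' 0 = 0

/-- Admissible domains for the IVP: `[0,∞)` or `[0,R)` with `0 < R`. -/
def IVPDomain (J : Set ℝ) : Prop :=
  J = Set.Ici (0:ℝ) ∨ ∃ R : ℝ, 0 < R ∧ J = Set.Ico (0:ℝ) R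

/-- The solution `u` of the IVP on `J` cannot be extended to a solution on a
strictly larger admissible domain. -/
def Noncontinuable (N m : ℝ) (f : ℝ → ℝ) (α : ℝ) (J : Set ℝ) (u u' : ℝ → ℝ) : Prop :=
  ∀ J' : Set ℝ, IVPDomain J' → J ⊂ J' →
    ¬ ∃ v v' : ℝ → ℝ, IsIVPSolutionOn N m f α J' v v' ∧ Set.EqOn v u J ∧ Set.EqOn v' u' J

open Classical in
/-- The filter describing the approach to the right endpoint of an IVP domain. -/
noncomputable def domEnd (J : Set ℝ) : Filter ℝ :=
  if J = Set.Ici (0:ℝ) then Filter.atTop else nhdsWithin (sSup J) (Set.Iio (sSup J))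

def LocLipschitzOn (f : ℝ → ℝ) (S : Set ℝ) : Prop :=
  ∀ x ∈ S, ∃ ε : ℝ, 0 < ε ∧ ∃ K : NNReal, LipschitzOnWith K f (Metric.ball x ε ∩ S)

/-- Assumption (f₂). -/
structure Hf2 (f : ℝ → ℝ) (βm βp : ℝ) (γm γp : EReal) : Prop where
  hβm : βm < 0
  hβp : 0 < βp
  hFneg : ∀ s : ℝ, s ∈ Set.Ioo βm βp → s ≠ 0 → Fint f s < 0
  hFβm : Fint f βm = 0
  hFβp : Fint f βp = 0
  hγp : (βp : EReal) < γp
  hγm : γm < (βm : EReal)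
  hfpos : ∀ s : ℝ, βp < s → (s : EReal) < γp → 0 < f s
  hfneg : ∀ s : ℝ, γm < (s : EReal) → s < βm → f s < 0
  hγpzero : ∀ s : ℝ, (s : EReal) = γp → f s = 0
  hγmzero : ∀ s : ℝ, (s : EReal) = γm → f s = 0
  hlim : ∃ L : EReal,
    Filter.Tendsto (fun s : ℝ => (Fint f s : EReal))
      (Filter.comap Real.toEReal (nhdsWithin γp (Set.Iio γp))) (nhds L) ∧
    Filter.Tendsto (fun s : ℝ => (Fint f s : EReal))
      (Filter.comap Real.toEReal (nhdsWithin γm (Set.Ioi γm))) (nhds L)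
  hlip : LocLipschitzOn f {s : ℝ | (γm < (s : EReal) ∧ s < 0) ∨ (0 < s ∧ (s : EReal) < γp)}

/-- Assumption (f₃). -/
def Hf3 (N m : ℝ) (f : ℝ → ℝ) (βm βp : ℝ) (γm γp : EReal) : Prop :=
  (γp = ⊤ →
    (∃ βb : ℝ, βp < βb ∧ ∀ s : ℝ, βb ≤ s → 0 ≤ Qfun N m f s) ∧
    (∃ θ : ℝ, θ ∈ Set.Ioo (0:ℝ) 1 ∧
      Filter.Tendsto (fun s : ℝ =>
        sInf ((fun p : ℝ × ℝ =>
          Qfun N m f p.2 * ((|s| ^ (m - 2) * s) / f p.1) ^ (N / m)) ''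
            (Set.Icc (θ * s) s ×ˢ Set.Icc (θ * s) s)))
        Filter.atTop Filter.atTop)) ∧
  (γm = ⊥ →
    (∃ βb : ℝ, -βb < βm ∧ ∀ s : ℝ, s ≤ -βb → 0 ≤ Qfun N m f s) ∧
    (∃ θ : ℝ, θ ∈ Set.Ioo (0:ℝ) 1 ∧
      Filter.Tendsto (fun s : ℝ =>
        sInf ((fun p : ℝ × ℝ =>
          Qfun N m f p.2 * ((|s| ^ (m - 2) * s) / f p.1) ^ (N / m)) ''
            (Set.Icc s (θ * s) ×ˢ Set.Icc s (θ * s))))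
        Filter.atBot Filter.atTop))

/-- Assumption (f₄). -/
def Hf4 (N m : ℝ) (f : ℝ → ℝ) (βm βp : ℝ) (γm γp : EReal) : Prop :=
  (γp ≠ ⊤ → ∃ L₀ : ℝ, 0 < L₀ ∧ ∃ βb : ℝ, βp < βb ∧
    ∀ s : ℝ, βb ≤ s → (s : EReal) < γp → f s ≤ L₀ * (γp.toReal - s) ^ (m - 1)) ∧
  (γm ≠ ⊥ → ∃ L₀ : ℝ, 0 < L₀ ∧ ∃ βb : ℝ, -βm < βb ∧
    ∀ s : ℝ, γm < (s : EReal) → s ≤ -βb → -f s ≤ L₀ * (s - γm.toReal) ^ (m - 1))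

/-! Multiply the equation by `t^N u'` and by `t^(N-1) u` and combine: the Pohozaev function
`P(t) = m t^N I(t) + (N - m) t^(N-1) u(t) φ_m(u'(t))` satisfies `P' = t^(N-1) Q(u)`.
Integrating from `R₁` gives the claim, since `u'(R₁) = 0` makes `P(R₁) = m R₁^N F(u(R₁))`,
and the correction term at `r` is `≤ 0` because `N ≥ m` and `u φ_m(u') = |u'|^(m-2) u u' ≤ 0`. -/

open scoped Topology

lemma phim_zero (m : ℝ) : phim m 0 = 0 := by simp [phim]

section phim

variable {m : ℝ}

lemma abs_phim (hm : m ≠ 1) (x : ℝ) : |phim m x| = |x| ^ (m - 1) := by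
  rcases eq_or_ne x 0 with rfl | hx
  · simp [phim, Real.zero_rpow (sub_ne_zero.mpr hm)]
  · rw [phim, abs_mul, abs_of_nonneg (Real.rpow_nonneg (abs_nonneg x) _),
      ← Real.rpow_add_one (abs_ne_zero.mpr hx)]
    ring_nf

lemma abs_phim_rpow_conj (hm : m ≠ 1) (x : ℝ) : |phim m x| ^ (m / (m - 1)) = |x| ^ m := by
  rw [abs_phim hm, ← Real.rpow_mul (abs_nonneg x), mul_div_cancel₀ _ (sub_ne_zero.mpr hm)]

lemma phim_conj_phim (hm : m ≠ 1) (x : ℝ) : phim (m / (m - 1)) (phim m x) = x := by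
  rcases eq_or_ne x 0 with rfl | hx
  · simp [phim]
  · have hm1 : m - 1 ≠ 0 := sub_ne_zero.mpr hm
    rw [phim, abs_phim hm, phim, ← Real.rpow_mul (abs_nonneg x), ← mul_assoc,
      ← Real.rpow_add (abs_pos.mpr hx)]
    have hexp : (m - 1) * (m / (m - 1) - 2) + (m - 2) = 0 := by field_simp; ring
    rw [hexp, Real.rpow_zero, one_mul]

lemma mul_phim_self (hm : m ≠ 0) (x : ℝ) : x * phim m x = |x| ^ m := by
  rcases eq_or_ne x 0 with rfl | hx
  · simp [phim, Real.zero_rpow hm]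
  · have hsq : x * (|x| ^ (m - 2) * x) = |x| ^ (m - 2) * |x| ^ (2:ℝ) := by
      rw [Real.rpow_two, sq_abs]; ring
    rw [phim, hsq, ← Real.rpow_add (abs_pos.mpr hx)]
    ring_nf

lemma mul_phim_nonpos {a x : ℝ} (h : a * x ≤ 0) : a * phim m x ≤ 0 := by
  have hfactor : a * phim m x = |x| ^ (m - 2) * (a * x) := by rw [phim]; ring
  exact hfactor ▸ mul_nonpos_of_nonneg_of_nonpos (by positivity) h

/-- Only `φ_m ∘ v` is differentiable, so `|v|^m / m'` is differentiated as `|φ_m ∘ v|^{m'} / m'`,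
using `φ_{m'} ∘ φ_m = id`. -/
lemma HasDerivAt.abs_rpow_div_conj (hm : 1 < m) {v : ℝ → ℝ} {a x : ℝ}
    (hv : HasDerivAt (fun t => phim m (v t)) a x) :
    HasDerivAt (fun t => |v t| ^ m / (m / (m - 1))) (v x * a) x := by
  have hm1 : m ≠ 1 := hm.ne'
  have hq : 1 < m / (m - 1) := by rw [lt_div_iff₀ (by linarith)]; linarith
  have hG := ((hasDerivAt_abs_rpow (phim m (v x)) hq).div_const (m / (m - 1))).comp x hv
  simp only [Function.comp_def, abs_phim_rpow_conj hm1] at hG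
  refine hG.congr_deriv ?_
  have hq0 : m / (m - 1) ≠ 0 := by positivity
  conv_rhs => rw [← phim_conj_phim hm1 (v x), phim]
  field_simp

end phim

section primitive

variable {f : ℝ → ℝ}

lemma hasDerivAt_Fint (hf : Continuous f) (s : ℝ) : HasDerivAt (Fint f) (f s) s :=
  (hf.integral_hasStrictDerivAt 0 s).hasDerivAt

lemma continuous_Fint (hf : Continuous f) : Continuous (Fint f) :=
  continuous_iff_continuousAt.mpr fun s => (hasDerivAt_Fint hf s).continuousAt

lemma continuous_Qfun (N m : ℝ) (hf : Continuous f) : Continuous (Qfun N m f) := by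
  have := continuous_Fint hf
  unfold Qfun
  fun_prop

end primitive

noncomputable def pohozaev (N m : ℝ) (f u u' : ℝ → ℝ) (t : ℝ) : ℝ :=
  m * (t ^ N * (|u' t| ^ m / (m / (m - 1)) + Fint f (u t))) +
    (N - m) * (t ^ (N - 1) * (u t * phim m (u' t)))

section pohozaev

variable {N m : ℝ} {f u u' : ℝ → ℝ}

lemma pohozaev_of_deriv_eq_zero (hm : m ≠ 0) {t : ℝ} (ht : u' t = 0) :
    pohozaev N m f u u' t = m * t ^ N * Fint f (u t) := by
  simp [pohozaev, ht, phim_zero, Real.zero_rpow hm, mul_assoc]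

lemma hasDerivAt_pohozaev (hm : 1 < m) (hf : Continuous f) {x a : ℝ} (hx : 0 < x)
    (hu : HasDerivAt u (u' x) x) (hw : HasDerivAt (fun t => phim m (u' t)) a x)
    (heq : a + (N - 1) / x * phim m (u' x) + f (u x) = 0) :
    HasDerivAt (pohozaev N m f u u') (x ^ (N - 1) * Qfun N m f (u x)) x := by
  have hpowN : HasDerivAt (fun t : ℝ => t ^ N) (N * x ^ (N - 1)) x :=
    Real.hasDerivAt_rpow_const (Or.inl hx.ne')
  have hpowN1 : HasDerivAt (fun t : ℝ => t ^ (N - 1)) ((N - 1) * x ^ (N - 1 - 1)) x :=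
    Real.hasDerivAt_rpow_const (Or.inl hx.ne')
  have hI := hw.abs_rpow_div_conj hm |>.add ((hasDerivAt_Fint hf (u x)).comp x hu)
  have hP := ((hpowN.mul hI).const_mul m).add ((hpowN1.mul (hu.mul hw)).const_mul (N - m))
  refine HasDerivAt.congr_deriv (f := pohozaev N m f u u') hP ?_
  have ha : a = -((N - 1) / x * phim m (u' x) + f (u x)) := by linarith
  have hE : u' x * phim m (u' x) = |u' x| ^ m := mul_phim_self (by linarith) (u' x)
  simp only [Pi.add_apply, Pi.mul_apply, Function.comp_apply]
  rw [ha, Real.rpow_sub_one hx.ne' N, Real.rpow_sub_one hx.ne' (N - 1),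
    Real.rpow_sub_one hx.ne' N, Qfun]
  field_simp
  linear_combination x * N * (1 - m) * hE

end pohozaev

namespace IsSolutionOn

variable {N m : ℝ} {f : ℝ → ℝ} {J : Set ℝ} {u u' : ℝ → ℝ}

protected lemma continuousOn (hu : IsSolutionOn N m f J u u') : ContinuousOn u J :=
  fun t ht => (hu.1 t ht).continuousWithinAt

lemma continuousOn_pohozaev (hm : 0 < m) (hf : Continuous f)
    (hu : IsSolutionOn N m f J u u') (hJ : J ⊆ Ioi 0) :
    ContinuousOn (pohozaev N m f u u') J := by
  have hcu := hu.continuousOn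
  obtain ⟨-, hu'c, w', hwd, -, -⟩ := hu
  rw [inter_eq_left.mpr hJ] at hwd
  have hcw : ContinuousOn (fun t => phim m (u' t)) J := fun t ht => (hwd t ht).continuousWithinAt
  have hcE : ContinuousOn (fun t => |u' t| ^ m) J :=
    hu'c.abs.rpow_const fun _ _ => Or.inr hm.le
  have hcF := (continuous_Fint hf).comp_continuousOn hcu
  have hpow : ∀ p : ℝ, ContinuousOn (fun t : ℝ => t ^ p) J := fun p =>
    continuousOn_id.rpow_const fun t ht => Or.inl (hJ ht).ne'
  unfold pohozaev
  fun_prop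

lemma hasDerivAt_pohozaev (hm : 1 < m) (hf : Continuous f)
    (hu : IsSolutionOn N m f J u u') (hJ : J ⊆ Ioi 0) {x : ℝ} (hx : J ∈ 𝓝 x) :
    HasDerivAt (pohozaev N m f u u') (x ^ (N - 1) * Qfun N m f (u x)) x := by
  obtain ⟨hud, -, w', hwd, -, heq⟩ := hu
  rw [inter_eq_left.mpr hJ] at hwd heq
  have hxJ : x ∈ J := mem_of_mem_nhds hx
  exact _root_.hasDerivAt_pohozaev hm hf (hJ hxJ) ((hud x hxJ).hasDerivAt hx)
    ((hwd x hxJ).hasDerivAt hx) (heq x hxJ)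

lemma integral_eq_pohozaev_sub (hm : 1 < m) (hf : Continuous f) {a b r : ℝ}
    (hu : IsSolutionOn N m f (Icc a b) u u') (ha : 0 < a) (hr : r ∈ Icc a b) :
    ∫ t in a..r, t ^ (N - 1) * Qfun N m f (u t) =
      pohozaev N m f u u' r - pohozaev N m f u u' a := by
  have hJ : Icc a b ⊆ Ioi 0 := fun t ht => ha.trans_le ht.1
  have hsub : Icc a r ⊆ Icc a b := Icc_subset_Icc_right hr.2
  have hcQ : ContinuousOn (fun t => t ^ (N - 1) * Qfun N m f (u t)) (Icc a r) :=
    (continuousOn_id.rpow_const fun t ht => Or.inl (hJ (hsub ht)).ne').mul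
      ((continuous_Qfun N m hf).comp_continuousOn (hu.continuousOn.mono hsub))
  refine intervalIntegral.integral_eq_sub_of_hasDeriv_right_of_le hr.1
    ((hu.continuousOn_pohozaev (by linarith) hf hJ).mono hsub) (fun x hx => ?_)
    (hcQ.intervalIntegrable_of_Icc hr.1)
  exact (hu.hasDerivAt_pohozaev hm hf hJ
    (Icc_mem_nhds hx.1 (hx.2.trans_le hr.2))).hasDerivWithinAt

end IsSolutionOn

theorem pohozaev_inequality_general
    (N m : ℝ) (hm : 1 < m) (hNm : m ≤ N) (f : ℝ → ℝ) (hf : Continuous f)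
    (R₁ R₂ : ℝ) (hR₁ : 0 < R₁)
    (u u' : ℝ → ℝ) (hu : IsSolutionOn N m f (Set.Icc R₁ R₂) u u')
    (hstart : u' R₁ = 0)
    (hmono : ∀ t ∈ Set.Icc R₁ R₂, u t * u' t ≤ 0) :
    ∀ r ∈ Set.Icc R₁ R₂,
      (∫ t in R₁..r, t ^ (N - 1) * Qfun N m f (u t)) ≤
        m * r ^ N * (|u' r| ^ m / (m / (m - 1)) + Fint f (u r))
          - m * R₁ ^ N * Fint f (u R₁) := by
  intro r hr
  rw [hu.integral_eq_pohozaev_sub hm hf hR₁ hr, pohozaev_of_deriv_eq_zero (by linarith) hstart]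
  have hcross : (N - m) * (r ^ (N - 1) * (u r * phim m (u' r))) ≤ 0 :=
    mul_nonpos_of_nonneg_of_nonpos (sub_nonneg.mpr hNm) <|
      mul_nonpos_of_nonneg_of_nonpos (Real.rpow_nonneg (hR₁.le.trans hr.1) _)
        (mul_phim_nonpos (hmono r hr))
  rw [pohozaev]
  linarith

/-- integrated Pohozaev inequality on an interval where `u·u' ≤ 0`
and `u'(R₁) = 0`. -/
theorem pohozaev_inequality
    (N m : ℝ) (hm : 1 < m) (hNm : m ≤ N) (f : ℝ → ℝ) (hf : Continuous f)
    (R₁ R₂ : ℝ) (hR₁ : 0 < R₁) (hR : R₁ ≤ R₂)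
    (u u' : ℝ → ℝ) (hu : IsSolutionOn N m f (Set.Icc R₁ R₂) u u')
    (hstart : u' R₁ = 0)
    (hmono : ∀ t ∈ Set.Icc R₁ R₂, u t * u' t ≤ 0) :
    ∀ r ∈ Set.Icc R₁ R₂,
      (∫ t in R₁..r, t ^ (N - 1) * Qfun N m f (u t)) ≤
        m * r ^ N * (|u' r| ^ m / (m / (m - 1)) + Fint f (u r))
          - m * R₁ ^ N * Fint f (u R₁) :=
  pohozaev_inequality_general N m hm hNm f hf R₁ R₂ hR₁ u u' hu hstart hmono
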